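/- arXiv:1203.4270 — 5 statements merged into one kernel-verified Lean document; each statement's English description precedes it below -/
import Mathlib

section
/- If K is a non-separable compact Hausdorff space and μ is a strictly positive Borel probability measure on K (i.e., μ gives positive measure to every nonempty open set), then μ is not in the sequential closure of the finitely supported probability measures on K. -/
/-!
Call a probability measure `μ` *killed off* `D` if `∫⁻ f dμ = 0` for every nonnegative bounded
continuous `f` vanishing on `D`. A finitely supported measure is killed off its support, and since
weak* convergence is tested against exactly these functions, a limit of measures killed off `D`
is killed off `D`. By transfinite induction, every measure of the sequential closure is killed
off some countable set. For a strictly positive measure on a compact Hausdorff space, Urysohn's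
lemma shows that such a set must be dense, contradicting non-separability.
-/

open MeasureTheory Filter Set

/-- The sequential closure hierarchy over the finitely supported probability
measures on points of `A`, in the weak* topology on probability measures. -/
noncomputable def SeqClos {K : Type*} [TopologicalSpace K] [MeasurableSpace K]
    [OpensMeasurableSpace K] (A : Set K) : Ordinal.{0} → Set (ProbabilityMeasure K)
  | α =>
    if α = 0 then
      {μ | ∃ s : Finset K, ↑s ⊆ A ∧ μ (↑s : Set K) = 1}
    else
      {μ | ∃ f : ℕ → ProbabilityMeasure K,
        (∀ n, ∃ β : Ordinal.{0}, ∃ _ : β < α, f n ∈ SeqClos A β) ∧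
          Tendsto f atTop (nhds μ)}
  termination_by α => α

open scoped NNReal ENNReal BoundedContinuousFunction

lemma BoundedContinuousFunction.eq_zero_of_lintegral_eq_zero {X : Type*} [TopologicalSpace X]
    [MeasurableSpace X] [OpensMeasurableSpace X] (μ : Measure X) [μ.IsOpenPosMeasure]
    {f : X →ᵇ ℝ≥0} (hf : ∫⁻ x, f x ∂μ = 0) : f = 0 := by
  have hcont : Continuous fun x ↦ (f x : ℝ≥0∞) := ENNReal.continuous_coe.comp f.continuous
  have hzero := (Continuous.ae_eq_iff_eq μ hcont continuous_const).mp
    ((lintegral_eq_zero_iff hcont.measurable).mp hf)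
  ext x
  simpa using congrFun hzero x

namespace MeasureTheory.ProbabilityMeasure

variable {K : Type*} [TopologicalSpace K] [MeasurableSpace K]

def KilledOff (μ : ProbabilityMeasure K) (D : Set K) : Prop :=
  ∀ f : K →ᵇ ℝ≥0, EqOn f 0 D → ∫⁻ x, f x ∂(μ : Measure K) = 0

lemma KilledOff.mono {μ : ProbabilityMeasure K} {D D' : Set K} (h : μ.KilledOff D)
    (hD : D ⊆ D') : μ.KilledOff D' :=
  fun f hf ↦ h f (hf.mono hD)

lemma killedOff_of_measure_eq_one {μ : ProbabilityMeasure K} {s : Set K} (hs : MeasurableSet s)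
    (hμs : (μ : Measure K) s = 1) : μ.KilledOff s := by
  intro f hf
  have hae : ∀ᵐ x ∂(μ : Measure K), x ∈ s := by
    rwa [ae_iff, ← compl_def, prob_compl_eq_zero_iff hs]
  rw [lintegral_congr_ae (g := fun _ ↦ 0) (hae.mono fun x hx ↦ by simp [hf hx]), lintegral_zero]

lemma killedOff_of_tendsto [OpensMeasurableSpace K] {ι : Type*} {l : Filter ι} [l.NeBot]
    {μs : ι → ProbabilityMeasure K} {μ : ProbabilityMeasure K} {D : Set K}
    (hμs : ∀ i, (μs i).KilledOff D) (hlim : Tendsto μs l (nhds μ)) : μ.KilledOff D := by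
  intro f hf
  have hf_lim := tendsto_iff_forall_lintegral_tendsto.mp hlim f
  simp only [hμs _ f hf] at hf_lim
  exact tendsto_nhds_unique hf_lim tendsto_const_nhds

lemma exists_countable_killedOff_of_mem_seqClos [OpensMeasurableSpace K]
    [MeasurableSingletonClass K] {A : Set K} (α : Ordinal.{0}) {μ : ProbabilityMeasure K}
    (hμ : μ ∈ SeqClos A α) :
    ∃ D : Set K, D.Countable ∧ μ.KilledOff D := by
  induction α using WellFoundedLT.induction generalizing μ with
  | ind α ih =>
    rw [SeqClos] at hμ
    split_ifs at hμ
    · obtain ⟨s, -, hs⟩ := hμ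
      refine ⟨s, s.countable_toSet, killedOff_of_measure_eq_one s.measurableSet ?_⟩
      rw [← ennreal_coeFn_eq_coeFn_toMeasure, hs, ENNReal.coe_one]
    · obtain ⟨μs, hμs, hlim⟩ := hμ
      choose β hβ hmem using hμs
      choose D hD_countable hD using fun n ↦ ih (β n) (hβ n) (hmem n)
      exact ⟨⋃ n, D n, countable_iUnion hD_countable,
        killedOff_of_tendsto (fun n ↦ (hD n).mono (subset_iUnion D n)) hlim⟩

lemma KilledOff.dense [OpensMeasurableSpace K] [NormalSpace K] [T1Space K]
    {μ : ProbabilityMeasure K} [(μ : Measure K).IsOpenPosMeasure] {D : Set K}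
    (h : μ.KilledOff D) : Dense D := by
  refine fun x ↦ by_contra fun hx ↦ ?_
  obtain ⟨f, hf0, hf1, -⟩ := exists_bounded_zero_one_of_closed isClosed_closure
    isClosed_singleton (disjoint_singleton_right.mpr hx)
  have hpart_zero : f.nnrealPart = 0 :=
    BoundedContinuousFunction.eq_zero_of_lintegral_eq_zero (μ : Measure K)
      (h _ fun y hy ↦ by simp [hf0 (subset_closure hy)])
  have hpart_one : f.nnrealPart x = 1 := by simp [hf1 (mem_singleton x)]
  simp [hpart_zero] at hpart_one

end MeasureTheory.ProbabilityMeasure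

theorem stmt1 {K : Type*} [TopologicalSpace K] [MeasurableSpace K] [BorelSpace K]
    [CompactSpace K] [T2Space K]
    (hK : ¬ TopologicalSpace.SeparableSpace K)
    (μ : ProbabilityMeasure K)
    (hpos : ∀ U : Set K, IsOpen U → U.Nonempty → 0 < μ U) :
    μ ∉ SeqClos (univ : Set K) (Cardinal.aleph 1).ord := by
  intro hμ
  have : (μ : Measure K).IsOpenPosMeasure := ⟨fun U hU hne ↦
    (μ.null_iff_toMeasure_null U).not.mp (hpos U hU hne).ne'⟩
  obtain ⟨D, hD_countable, hD⟩ :=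
    ProbabilityMeasure.exists_countable_killedOff_of_mem_seqClos _ hμ
  exact hK ⟨D, hD_countable, hD.dense⟩
end

section
/- Let K be a compact Hausdorff space such that C(K) is a Grothendieck space. If a sequence (μ_n) of finitely supported probability measures on K converges weak* to a probability measure μ, then μ is purely atomic; in fact μ = Σ_n a_n δ_{x_n} where {x_n : n ∈ ω} = ⋃_n supp(μ_n). -/
open MeasureTheory Filter Set
open scoped ENNReal NNReal

/-!
Every `μn n` is carried by the countable set `A = ⋃ n, s n`. The Grothendieck property, applied
to the bounded Borel function `1_A`, passes `μn n A = 1` to the weak* limit, so `μ A = 1`; and a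
measure carried by a countable set `range x` is the sum of the masses of the disjointed
singletons `{x n}`.
-/

namespace MeasureTheory

namespace Measure

variable {α : Type*} [MeasurableSpace α]

lemma restrict_eq_smul_dirac_of_subset_singleton (μ : Measure α) {s : Set α} {a : α}
    (hs : s ⊆ {a}) : μ.restrict s = μ s • dirac a := by
  rcases subset_singleton_iff_eq.1 hs with rfl | rfl
  · simp
  · exact restrict_singleton μ a

lemma eq_sum_smul_dirac_of_measure_compl_range_eq_zero [MeasurableSingletonClass α]
    (μ : Measure α) {x : ℕ → α} (h : μ (range x)ᶜ = 0) :
    μ = sum fun n => μ (disjointed (fun n => {x n}) n) • dirac (x n) := by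
  have hB : ∀ n, MeasurableSet (disjointed (fun n => ({x n} : Set α)) n) :=
    .disjointed fun n => measurableSet_singleton (x n)
  calc μ = μ.restrict (range x) := (restrict_eq_self_of_ae_mem h).symm
    _ = μ.restrict (⋃ n, disjointed (fun n => {x n}) n) := by
      rw [iUnion_disjointed, iUnion_singleton_eq_range]
    _ = sum fun n => μ.restrict (disjointed (fun n => {x n}) n) :=
      restrict_iUnion (disjoint_disjointed _) hB
    _ = sum fun n => μ (disjointed (fun n => {x n}) n) • dirac (x n) := by
      congr with n : 1
      exact restrict_eq_smul_dirac_of_subset_singleton μ (disjointed_subset _ n)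

end Measure

lemma ProbabilityMeasure.toMeasure_apply_eq_one_of_tendsto_integral_indicator {Ω ι : Type*}
    [MeasurableSpace Ω] {l : Filter ι} [l.NeBot] {ν : ι → ProbabilityMeasure Ω}
    {ρ : ProbabilityMeasure Ω} {A : Set Ω} (hA : MeasurableSet A) (hν : ∀ i, ν i A = 1)
    (h : Tendsto (fun i => ∫ x, A.indicator (1 : Ω → ℝ) x ∂(ν i : Measure Ω)) l
      (nhds (∫ x, A.indicator (1 : Ω → ℝ) x ∂(ρ : Measure Ω)))) :
    (ρ : Measure Ω) A = 1 := by
  simp only [integral_indicator_one hA, ProbabilityMeasure.measureReal_eq_coe_coeFn, hν,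
    NNReal.coe_one] at h
  rw [← ProbabilityMeasure.ennreal_coeFn_eq_coeFn_toMeasure]
  exact_mod_cast tendsto_nhds_unique h tendsto_const_nhds

end MeasureTheory

theorem stmt2_general {K : Type*} [TopologicalSpace K] [MeasurableSpace K] [BorelSpace K]
    [T2Space K]
    -- `C(K)` is a Grothendieck space: weak* convergent sequences of probability
    -- measures converge on every bounded Borel function
    (hGro : ∀ (ν : ℕ → ProbabilityMeasure K) (ρ : ProbabilityMeasure K),
      Tendsto ν atTop (nhds ρ) → ∀ f : K → ℝ, Measurable f → (∃ C, ∀ x, |f x| ≤ C) →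
        Tendsto (fun n => ∫ x, f x ∂(ν n : Measure K)) atTop
          (nhds (∫ x, f x ∂(ρ : Measure K))))
    (μn : ℕ → ProbabilityMeasure K) (s : ℕ → Finset K)
    (hsupp : ∀ n, μn n (↑(s n) : Set K) = 1)
    (μ : ProbabilityMeasure K)
    (hconv : Tendsto μn atTop (nhds μ)) :
    ∃ (x : ℕ → K) (a : ℕ → ℝ≥0∞),
      Set.range x = ⋃ n, ((s n : Set K)) ∧
      (μ : Measure K) = Measure.sum (fun n => a n • Measure.dirac (x n)) := by
  set A := ⋃ n, (s n : Set K)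
  have hAc : A.Countable := countable_iUnion fun n => (s n).countable_toSet
  have hA : MeasurableSet A := hAc.measurableSet
  have hμnA : ∀ n, μn n A = 1 := fun n =>
    le_antisymm ((μn n).apply_le_one A)
      (hsupp n ▸ (μn n).apply_mono (subset_iUnion (fun n => (s n : Set K)) n))
  have hμA : (μ : Measure K) A = 1 := by
    refine ProbabilityMeasure.toMeasure_apply_eq_one_of_tendsto_integral_indicator hA hμnA
      (hGro μn μ hconv _ (measurable_const.indicator hA) ⟨1, fun y => ?_⟩)
    by_cases hy : y ∈ A <;> simp [hy]
  obtain ⟨x, hx⟩ := hAc.exists_eq_range (nonempty_of_measure_ne_zero (hμA ▸ one_ne_zero))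
  refine ⟨x, _, hx.symm, Measure.eq_sum_smul_dirac_of_measure_compl_range_eq_zero _ ?_⟩
  rwa [← hx, prob_compl_eq_zero_iff hA]

theorem stmt2 {K : Type*} [TopologicalSpace K] [MeasurableSpace K] [BorelSpace K]
    [CompactSpace K] [T2Space K]
    -- `C(K)` is a Grothendieck space: weak* convergent sequences of probability
    -- measures converge on every bounded Borel function
    (hGro : ∀ (ν : ℕ → ProbabilityMeasure K) (ρ : ProbabilityMeasure K),
      Tendsto ν atTop (nhds ρ) → ∀ f : K → ℝ, Measurable f → (∃ C, ∀ x, |f x| ≤ C) →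
        Tendsto (fun n => ∫ x, f x ∂(ν n : Measure K)) atTop
          (nhds (∫ x, f x ∂(ρ : Measure K))))
    (μn : ℕ → ProbabilityMeasure K) (s : ℕ → Finset K)
    (hsupp : ∀ n, μn n (↑(s n) : Set K) = 1)
    (hpos : ∀ n, ∀ y ∈ s n, 0 < μn n {y})
    (μ : ProbabilityMeasure K)
    (hconv : Tendsto μn atTop (nhds μ)) :
    ∃ (x : ℕ → K) (a : ℕ → ℝ≥0∞),
      Set.range x = ⋃ n, ((s n : Set K)) ∧
      (μ : Measure K) = Measure.sum (fun n => a n • Measure.dirac (x n)) :=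
  stmt2_general hGro μn s hsupp μ hconv
end

section
/- Let K be the Stone space of the algebra generated by the density-zero ideal 𝒵 and a lifting of the measure algebra into the density sets, carrying the density measure μ. Then μ is orthogonal to every finitely supported probability measure on K; more generally, if every ultrafilter in K contains sets of arbitrarily small μ-measure, then μ is orthogonal to every finitely supported measure. -/
/-!
Ultrafilters are upward closed, so if `Aᵢ ∈ Uᵢ` are small sets with `μ Aᵢ < δ / 2^(i+1)`, their
join `F` lies in each of the finitely many `Uᵢ`, hence has full `ν`-measure, while subadditivity
of `μ` keeps `μ F < δ`.
-/

open Filter Set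
open scoped Classical

/-- An ultrafilter on a Boolean algebra, as a subset. -/
def IsUltra {B : Type*} [BooleanAlgebra B] (u : Set B) : Prop :=
  ⊤ ∈ u ∧ ⊥ ∉ u ∧ (∀ a b : B, a ∈ u → b ∈ u → a ⊓ b ∈ u) ∧
    (∀ a b : B, a ∈ u → a ≤ b → b ∈ u) ∧ (∀ a : B, a ∈ u ∨ aᶜ ∈ u)

section FinitelyAdditive

variable {B : Type*} [BooleanAlgebra B] {μ : B → ℝ}

theorem map_bot_eq_zero_of_additive (hadd : ∀ a b : B, Disjoint a b → μ (a ⊔ b) = μ a + μ b) :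
    μ ⊥ = 0 := by
  have h := hadd ⊥ ⊥ disjoint_bot_left
  rw [bot_sup_eq] at h
  linarith

theorem monotone_of_additive (h0 : ∀ a : B, 0 ≤ μ a)
    (hadd : ∀ a b : B, Disjoint a b → μ (a ⊔ b) = μ a + μ b) : Monotone μ := fun a b hab => by
  have h := hadd a (b \ a) disjoint_sdiff_self_right
  rw [sup_sdiff_cancel_right hab] at h
  linarith [h0 (b \ a)]

theorem map_sup_le_of_additive (h0 : ∀ a : B, 0 ≤ μ a)
    (hadd : ∀ a b : B, Disjoint a b → μ (a ⊔ b) = μ a + μ b) (a b : B) :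
    μ (a ⊔ b) ≤ μ a + μ b := by
  have h := hadd a (b \ a) disjoint_sdiff_self_right
  rw [sup_sdiff_self_right] at h
  linarith [monotone_of_additive h0 hadd (sdiff_le : b \ a ≤ b)]

theorem exists_forall_mem_and_map_lt {ι : Type*} (h0 : ∀ a : B, 0 ≤ μ a)
    (hadd : ∀ a b : B, Disjoint a b → μ (a ⊔ b) = μ a + μ b) {U : ι → Set B} (s : Finset ι)
    (hU : ∀ i ∈ s, IsUpperSet (U i)) (hsmall : ∀ i ∈ s, ∀ ε : ℝ, 0 < ε → ∃ A ∈ U i, μ A < ε)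
    {ε : ℝ} (hε : 0 < ε) : ∃ F : B, (∀ i ∈ s, F ∈ U i) ∧ μ F < ε := by
  induction s using Finset.cons_induction generalizing ε with
  | empty => exact ⟨⊥, by simp, by rwa [map_bot_eq_zero_of_additive hadd]⟩
  | cons j s hj ih =>
    obtain ⟨A, hA, hAε⟩ := hsmall j (Finset.mem_cons_self j s) (ε / 2) (half_pos hε)
    obtain ⟨F, hF, hFε⟩ := ih (fun i hi => hU i (Finset.mem_cons_of_mem hi))
      (fun i hi => hsmall i (Finset.mem_cons_of_mem hi)) (half_pos hε)
    refine ⟨A ⊔ F, (Finset.forall_mem_cons hj _).2 ⟨?_, fun i hi => ?_⟩, ?_⟩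
    · exact hU j (Finset.mem_cons_self j s) le_sup_left hA
    · exact hU i (Finset.mem_cons_of_mem hi) le_sup_right (hF i hi)
    · linarith [map_sup_le_of_additive h0 hadd A F]

end FinitelyAdditive

theorem IsUltra.isUpperSet {B : Type*} [BooleanAlgebra B] {u : Set B} (hu : IsUltra u) :
    IsUpperSet u :=
  fun a b hab ha => hu.2.2.2.1 a b ha hab

theorem stmt7_general {B : Type*} [BooleanAlgebra B] (μ : B → ℝ)
    (hμ0 : ∀ a : B, 0 ≤ μ a)
    (hμadd : ∀ a b : B, Disjoint a b → μ (a ⊔ b) = μ a + μ b)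
    (hsmall : ∀ u : Set B, IsUltra u → ∀ ε : ℝ, 0 < ε → ∃ A ∈ u, μ A < ε) :
    ∀ (m : ℕ) (w : ℕ → ℝ) (U : ℕ → Set B),
      (∀ i < m, IsUltra (U i)) → (∀ i < m, 0 ≤ w i) →
      (∑ i ∈ Finset.range m, w i) = 1 →
      ∀ δ : ℝ, 0 < δ →
        ∃ F : B, (∑ i ∈ Finset.range m, w i * (if F ∈ U i then (1 : ℝ) else 0)) > 1 - δ
          ∧ μ F < δ := by
  intro m w U hU _ hsum δ hδ
  have hU' : ∀ i ∈ Finset.range m, IsUltra (U i) := fun i hi => hU i (Finset.mem_range.1 hi)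
  obtain ⟨F, hF, hFδ⟩ := exists_forall_mem_and_map_lt hμ0 hμadd (Finset.range m)
    (fun i hi => (hU' i hi).isUpperSet) (fun i hi => hsmall (U i) (hU' i hi)) hδ
  refine ⟨F, ?_, hFδ⟩
  rw [Finset.sum_congr rfl fun i hi => by rw [if_pos (hF i hi), mul_one], hsum]
  linarith

/-- If every ultrafilter on `𝔹` contains elements of arbitrarily small `μ`-measure,
then `μ` is orthogonal to every finitely supported measure on the Stone space of `𝔹`,
i.e. to every finite convex combination of Dirac measures at ultrafilters: for every
`δ > 0` there is `F ∈ 𝔹` whose `ν`-measure exceeds `1 - δ` while `μ F < δ`. -/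
theorem stmt7 {B : Type*} [BooleanAlgebra B] (μ : B → ℝ)
    (hμ1 : μ ⊤ = 1) (hμ0 : ∀ a : B, 0 ≤ μ a)
    (hμadd : ∀ a b : B, Disjoint a b → μ (a ⊔ b) = μ a + μ b)
    (hsmall : ∀ u : Set B, IsUltra u → ∀ ε : ℝ, 0 < ε → ∃ A ∈ u, μ A < ε) :
    ∀ (m : ℕ) (w : ℕ → ℝ) (U : ℕ → Set B),
      (∀ i < m, IsUltra (U i)) → (∀ i < m, 0 ≤ w i) →
      (∑ i ∈ Finset.range m, w i) = 1 →
      ∀ δ : ℝ, 0 < δ →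
        ∃ F : B, (∑ i ∈ Finset.range m, w i * (if F ∈ U i then (1 : ℝ) else 0)) > 1 - δ
          ∧ μ F < δ :=
  stmt7_general μ hμ0 hμadd hsmall
end

section
/- Let K be a zero-dimensional compact Hausdorff space, μ ∈ S_α(K), and f : K → ℝ a nonnegative continuous function with ∫ f dμ = 1. Then the measure ν defined by ν(A) = ∫_A f dμ belongs to S_α(K). -/
open MeasureTheory Filter Set
open scoped ENNReal NNReal

open scoped Topology BoundedContinuousFunction

/-! Reweighting by a bounded continuous density `g` is weak* continuous on finite measures, because
`∫ φ d(g • μ) = ∫ g φ dμ` and `g φ` is again bounded and continuous; normalization is continuous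
away from the zero measure. Hence, by induction on `α`, the normalized reweighting of a limit of
measures from lower levels is the limit of their normalized reweightings, which are eventually
defined. At level `0`, reweighting keeps a measure carried by the same finite set, by absolute
continuity. For a probability density, normalization does nothing. -/

namespace MeasureTheory

variable {Ω : Type*} [MeasurableSpace Ω]

lemma ProbabilityMeasure.apply_eq_one_iff_ae_mem (μ : ProbabilityMeasure Ω) {s : Set Ω}
    (hs : MeasurableSet s) : μ s = 1 ↔ ∀ᵐ x ∂(μ : Measure Ω), x ∈ s := by
  rw [ae_mem_iff_measure_eq hs.nullMeasurableSet, measure_univ,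
    ← μ.ennreal_coeFn_eq_coeFn_toMeasure, ENNReal.coe_eq_one]

namespace FiniteMeasure

lemma normalize_absolutelyContinuous [Nonempty Ω] {μ : FiniteMeasure Ω} (hμ : μ ≠ 0) :
    (μ.normalize : Measure Ω) ≪ μ := by
  rw [μ.toMeasure_normalize_eq_of_nonzero hμ]
  exact Measure.smul_absolutelyContinuous

variable [TopologicalSpace Ω]

noncomputable def withDensity (μ : FiniteMeasure Ω) (g : Ω →ᵇ ℝ≥0) : FiniteMeasure Ω :=
  ⟨(μ : Measure Ω).withDensity (fun x => g x),
    isFiniteMeasure_withDensity (g.lintegral_lt_top_of_nnreal μ).ne⟩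

@[simp] lemma toMeasure_withDensity (μ : FiniteMeasure Ω) (g : Ω →ᵇ ℝ≥0) :
    (μ.withDensity g : Measure Ω) = (μ : Measure Ω).withDensity (fun x => g x) := rfl

variable [OpensMeasurableSpace Ω]

lemma lintegral_withDensity (μ : FiniteMeasure Ω) (g φ : Ω →ᵇ ℝ≥0) :
    ∫⁻ x, φ x ∂(μ.withDensity g : Measure Ω) = ∫⁻ x, (g * φ) x ∂(μ : Measure Ω) := by
  rw [toMeasure_withDensity, lintegral_withDensity_eq_lintegral_mul _ (by fun_prop) (by fun_prop)]
  simp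

lemma continuous_withDensity (g : Ω →ᵇ ℝ≥0) :
    Continuous fun μ : FiniteMeasure Ω => μ.withDensity g := by
  refine continuous_iff_forall_continuous_lintegral.mpr fun φ => ?_
  simp_rw [lintegral_withDensity]
  exact continuous_lintegral_boundedContinuousFunction (g * φ)

end FiniteMeasure

end MeasureTheory

section SeqClos

variable {K : Type*} [TopologicalSpace K] [MeasurableSpace K] [OpensMeasurableSpace K]
  {A : Set K}

lemma seqClos_zero : SeqClos A 0 = {μ | ∃ s : Finset K, ↑s ⊆ A ∧ μ (↑s : Set K) = 1} := by
  rw [SeqClos]; simp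

lemma seqClos_of_ne_zero {α : Ordinal.{0}} (hα : α ≠ 0) :
    SeqClos A α = {μ | ∃ f : ℕ → ProbabilityMeasure K,
        (∀ n, ∃ β : Ordinal.{0}, ∃ _ : β < α, f n ∈ SeqClos A β) ∧
          Tendsto f atTop (𝓝 μ)} := by
  rw [SeqClos]; simp [hα]

variable [MeasurableSingletonClass K]

lemma mem_seqClos_zero_of_absolutelyContinuous {μ ν : ProbabilityMeasure K}
    (hμ : μ ∈ SeqClos A 0) (hνμ : (ν : Measure K) ≪ μ) : ν ∈ SeqClos A 0 := by
  rw [seqClos_zero] at hμ ⊢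
  obtain ⟨s, hsA, hμs⟩ := hμ
  have hs : MeasurableSet (s : Set K) := s.finite_toSet.measurableSet
  exact ⟨s, hsA, (ν.apply_eq_one_iff_ae_mem hs).mpr
    (hνμ.ae_le ((μ.apply_eq_one_iff_ae_mem hs).mp hμs))⟩

open FiniteMeasure in
theorem normalize_withDensity_mem_seqClos [Nonempty K] (g : K →ᵇ ℝ≥0) (α : Ordinal.{0}) :
    ∀ μ ∈ SeqClos A α, μ.toFiniteMeasure.withDensity g ≠ 0 →
      (μ.toFiniteMeasure.withDensity g).normalize ∈ SeqClos A α := by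
  induction α using WellFoundedLT.induction with | _ α ih => ?_
  intro μ hμ hg
  rcases eq_or_ne α 0 with rfl | hα
  · exact mem_seqClos_zero_of_absolutelyContinuous hμ
      ((normalize_absolutelyContinuous hg).trans (withDensity_absolutelyContinuous _ _))
  rw [seqClos_of_ne_zero hα] at hμ ⊢
  obtain ⟨μs, hμs, hlim⟩ := hμ
  have hlim' : Tendsto (fun n => (μs n).toFiniteMeasure.withDensity g) atTop
      (𝓝 (μ.toFiniteMeasure.withDensity g)) :=
    (((continuous_withDensity g).comp
      (ProbabilityMeasure.toFiniteMeasure_isEmbedding K).continuous).tendsto μ).comp hlim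
  have hne : ∀ᶠ n in atTop, (μs n).toFiniteMeasure.withDensity g ≠ 0 :=
    (hlim'.mass.eventually_ne ((mass_nonzero_iff _).mpr hg)).mono
      fun n hn => (mass_nonzero_iff _).mp hn
  classical
  -- Where the reweighted measure vanishes (finitely often), `μs n` itself serves as filler.
  refine ⟨fun n => if h : (μs n).toFiniteMeasure.withDensity g ≠ 0 then
    ((μs n).toFiniteMeasure.withDensity g).normalize else μs n, fun n => ?_, ?_⟩
  · obtain ⟨β, hβ, hmem⟩ := hμs n
    refine ⟨β, hβ, ?_⟩
    dsimp only
    split_ifs with h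
    · exact ih β hβ _ hmem h
    · exact hmem
  · refine (tendsto_normalize_of_tendsto hlim' hg).congr' ?_
    filter_upwards [hne] with n hn
    simp [hn]

end SeqClos

theorem stmt9_general {K : Type*} [TopologicalSpace K] [MeasurableSpace K] [BorelSpace K]
    [CompactSpace K] [T2Space K]
    (α : Ordinal.{0})
    (μ ν : ProbabilityMeasure K)
    (hμ : μ ∈ SeqClos (univ : Set K) α)
    (f : K → ℝ) (hf : Continuous f)
    (hν : (ν : Measure K) = (μ : Measure K).withDensity (fun x => ENNReal.ofReal (f x))) :
    ν ∈ SeqClos (univ : Set K) α := by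
  have : Nonempty K := nonempty_of_isProbabilityMeasure (μ : Measure K)
  let g : K →ᵇ ℝ≥0 := .mkOfCompact ⟨fun x => (f x).toNNReal, continuous_real_toNNReal.comp hf⟩
  -- `ENNReal.ofReal r` is by definition `(r.toNNReal : ℝ≥0∞)`.
  have hg : μ.toFiniteMeasure.withDensity g = ν.toFiniteMeasure := Subtype.ext hν.symm
  have h := normalize_withDensity_mem_seqClos g α μ hμ (hg ▸ ν.toFiniteMeasure_nonzero)
  rwa [hg, ProbabilityMeasure.toFiniteMeasure_normalize_eq_self] at h

theorem stmt9 {K : Type*} [TopologicalSpace K] [MeasurableSpace K] [BorelSpace K]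
    [CompactSpace K] [T2Space K] [TotallyDisconnectedSpace K]
    (α : Ordinal.{0})
    (μ ν : ProbabilityMeasure K)
    (hμ : μ ∈ SeqClos (univ : Set K) α)
    (f : K → ℝ) (hf : Continuous f) (hf0 : ∀ x, 0 ≤ f x)
    (hint : ∫ x, f x ∂(μ : Measure K) = 1)
    (hν : (ν : Measure K) = (μ : Measure K).withDensity (fun x => ENNReal.ofReal (f x))) :
    ν ∈ SeqClos (univ : Set K) α :=
  stmt9_general α μ ν hμ f hf hν
end

section
/- Let (𝔹_n) be Boolean subalgebras of 𝒫(ω) with pairwise disjoint infinite supports B_n partitioning ω, each (𝔹_n, μ_n) metrically isomorphic to the Lebesgue measure algebra (𝔐, λ). Let (𝔹, μ) be constructed canonically: 𝔹 is generated by the 'almost full' sets ℱ = {A : A ∩ B_n ∈ 𝔹_n^n for all n and μ'_n(A ∩ B_n) → 1} together with the diagonal copies ℱ' = {⋃_n φ_n(M)^n : M ∈ 𝔐}, and μ(A) = lim_n μ'_n(A ∩ B_n). Then (𝔐, λ) is metrically isomorphic to (𝔹, μ), via the map M ↦ ⋃_n φ_n(M)^n. -/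
open MeasureTheory Filter Set Function
open scoped symmDiff

noncomputable section

/-- The unit interval. -/
abbrev I01 : Type := Set.Icc (0 : ℝ) 1

/-- Lebesgue measure on the unit interval. -/
noncomputable def volI : Measure I01 := (volume : Measure ℝ).comap Subtype.val

/-- `φ` witnesses that the Lebesgue measure algebra `(𝔐, λ)` (Borel subsets of `[0,1]`
modulo Lebesgue-null sets) is metrically isomorphic to `(𝔹, μ)`: the induced map on
Borel sets modulo null sets is a measure-preserving Boolean isomorphism onto
`𝔹` modulo `μ`-null sets. -/
def IsMetricIsoFromLebesgue (𝔹 : Set (Set ℕ)) (μ : Set ℕ → ℝ)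
    (φ : Set I01 → Set ℕ) : Prop :=
  (∀ M : Set I01, MeasurableSet M → φ M ∈ 𝔹) ∧
  -- measure preserving
  (∀ M : Set I01, MeasurableSet M → μ (φ M) = (volI M).toReal) ∧
  -- well defined and injective modulo null sets
  (∀ M N : Set I01, MeasurableSet M → MeasurableSet N →
    (volI (M ∆ N) = 0 ↔ μ (φ M ∆ φ N) = 0)) ∧
  -- Boolean homomorphism modulo null sets
  (∀ M N : Set I01, MeasurableSet M → MeasurableSet N →
    μ (φ (M ∪ N) ∆ (φ M ∪ φ N)) = 0) ∧
  (∀ M N : Set I01, MeasurableSet M → MeasurableSet N →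
    μ (φ (M ∩ N) ∆ (φ M ∩ φ N)) = 0) ∧
  (∀ M : Set I01, MeasurableSet M → μ (φ Mᶜ ∆ (φ M)ᶜ) = 0) ∧
  μ (φ Set.univ ∆ Set.univ) = 0 ∧
  -- surjective modulo null sets
  (∀ C ∈ 𝔹, ∃ M : Set I01, MeasurableSet M ∧ μ (φ M ∆ C) = 0)

/-!
Pulling back along the enumeration `x n` of the `n`-th block is a Boolean homomorphism and
sends the diagonal copy `⋃ k, (φ_k M)^k` to `φ_n M`. So every quantity in the definition of a
metric isomorphism, evaluated on diagonal copies, is computed blockwise, where it is given by the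
metric isomorphism `φ_n`: the sequence whose limit defines `μ` is constant.

For surjectivity, the sets `C` approximated blockwise by one fixed `M`, in the sense that
`μ_n(φ_n M ∆ C_n) → 0` for the traces `C_n`, form an algebra. It contains the diagonal copies
and the almost full sets (take `M = [0,1]`), hence all of `𝔹`, and then `μ(⋃ k, (φ_k M)^k ∆ C) = 0`.
-/

open scoped Topology

instance : IsProbabilityMeasure volI :=
  inferInstanceAs (IsProbabilityMeasure (volume : Measure unitInterval))

theorem MeasureTheory.IsSetAlgebra.symmDiff_mem {α : Type*} {𝒜 : Set (Set α)} {s t : Set α}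
    (h𝒜 : IsSetAlgebra 𝒜) (hs : s ∈ 𝒜) (ht : t ∈ 𝒜) : s ∆ t ∈ 𝒜 :=
  h𝒜.union_mem (h𝒜.sdiff_mem hs ht) (h𝒜.sdiff_mem ht hs)

theorem sInter_setOf_isSetAlgebra_eq_generateSetAlgebra {α : Type*} (𝒢 : Set (Set α)) :
    ⋂₀ {𝒜 : Set (Set α) | 𝒢 ⊆ 𝒜 ∧ ∅ ∈ 𝒜 ∧ (∀ A ∈ 𝒜, Aᶜ ∈ 𝒜) ∧
      ∀ A ∈ 𝒜, ∀ C ∈ 𝒜, A ∪ C ∈ 𝒜} = generateSetAlgebra 𝒢 := by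
  have h := isSetAlgebra_generateSetAlgebra (𝒜 := 𝒢)
  refine Subset.antisymm (sInter_subset_of_mem ?_) (subset_sInter ?_)
  · exact ⟨self_subset_generateSetAlgebra, h.empty_mem, fun _ hs ↦ h.compl_mem hs,
      fun _ hs _ ↦ h.union_mem hs⟩
  · rintro 𝒜 ⟨h𝒢, hempty, hcompl, hunion⟩
    exact IsSetAlgebra.generateSetAlgebra_subset h𝒢
      ⟨hempty, fun s hs ↦ hcompl s hs, fun s t hs ht ↦ hunion s hs t ht⟩

theorem exists_mem_inter_range_eq_image_iff {α β : Type*} {f : α → β} (hf : Injective f)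
    {𝒞 : Set (Set α)} {s : Set β} : (∃ t ∈ 𝒞, s ∩ range f = f '' t) ↔ f ⁻¹' s ∈ 𝒞 := by
  refine ⟨fun ⟨t, ht, hst⟩ ↦ ?_, fun hs ↦ ⟨_, hs, image_preimage_eq_inter_range.symm⟩⟩
  rwa [← preimage_inter_range, hst, hf.preimage_image]

theorem preimage_iUnion_image_of_pairwise_disjoint {ι α β : Type*} {f : ι → α → β}
    (hf : ∀ i, Injective (f i)) (hd : Pairwise (Disjoint on fun i ↦ range (f i)))
    (s : ι → Set α) (i : ι) : f i ⁻¹' ⋃ j, f j '' s j = s i := by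
  ext a
  simp only [mem_preimage, mem_iUnion, mem_image]
  refine ⟨fun ⟨j, b, hb, hba⟩ ↦ ?_, fun ha ↦ ⟨i, a, ha, rfl⟩⟩
  obtain rfl : j = i := by_contra fun hji ↦
    (hd hji).ne_of_mem (mem_range_self b) (mem_range_self a) hba
  rwa [← (hf j) hba]

structure IsFinitelyAdditiveProbability {α : Type*} (𝒜 : Set (Set α)) (m : Set α → ℝ) :
    Prop where
  isSetAlgebra : IsSetAlgebra 𝒜
  nonneg : ∀ s ∈ 𝒜, 0 ≤ m s
  univ : m univ = 1
  union : ∀ s ∈ 𝒜, ∀ t ∈ 𝒜, Disjoint s t → m (s ∪ t) = m s + m t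

namespace IsFinitelyAdditiveProbability

variable {α : Type*} {𝒜 : Set (Set α)} {m : Set α → ℝ} {s t u : Set α}

theorem sdiff_of_subset (hm : IsFinitelyAdditiveProbability 𝒜 m) (hs : s ∈ 𝒜) (ht : t ∈ 𝒜)
    (hts : t ⊆ s) : m (s \ t) = m s - m t := by
  have := hm.union t ht (s \ t) (hm.isSetAlgebra.sdiff_mem hs ht) disjoint_sdiff_right
  rw [union_sdiff_cancel hts] at this
  linarith

theorem mono (hm : IsFinitelyAdditiveProbability 𝒜 m) (hs : s ∈ 𝒜) (ht : t ∈ 𝒜)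
    (hst : s ⊆ t) : m s ≤ m t := by
  have := hm.nonneg _ (hm.isSetAlgebra.sdiff_mem ht hs)
  rw [hm.sdiff_of_subset ht hs hst] at this
  linarith

theorem empty (hm : IsFinitelyAdditiveProbability 𝒜 m) : m ∅ = 0 := by
  have h := hm.isSetAlgebra.empty_mem
  simpa using hm.union ∅ h ∅ h (disjoint_empty _)

theorem compl (hm : IsFinitelyAdditiveProbability 𝒜 m) (hs : s ∈ 𝒜) : m sᶜ = 1 - m s := by
  rw [← hm.univ, ← hm.sdiff_of_subset hm.isSetAlgebra.univ_mem hs (subset_univ s),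
    compl_eq_univ_sdiff]

theorem union_le (hm : IsFinitelyAdditiveProbability 𝒜 m) (hs : s ∈ 𝒜) (ht : t ∈ 𝒜) :
    m (s ∪ t) ≤ m s + m t := by
  have h𝒜 := hm.isSetAlgebra
  rw [← union_sdiff_self, hm.union s hs _ (h𝒜.sdiff_mem ht hs) disjoint_sdiff_right]
  linarith [hm.mono (h𝒜.sdiff_mem ht hs) ht sdiff_subset]

theorem symmDiff_triangle (hm : IsFinitelyAdditiveProbability 𝒜 m) (hs : s ∈ 𝒜) (ht : t ∈ 𝒜)
    (hu : u ∈ 𝒜) : m (s ∆ u) ≤ m (s ∆ t) + m (t ∆ u) := by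
  have h𝒜 := hm.isSetAlgebra
  calc m (s ∆ u) ≤ m (s ∆ t ∪ t ∆ u) :=
        hm.mono (h𝒜.symmDiff_mem hs hu)
          (h𝒜.union_mem (h𝒜.symmDiff_mem hs ht) (h𝒜.symmDiff_mem ht hu))
          (_root_.symmDiff_triangle ..)
    _ ≤ m (s ∆ t) + m (t ∆ u) := hm.union_le (h𝒜.symmDiff_mem hs ht) (h𝒜.symmDiff_mem ht hu)

theorem eq_of_symmDiff_eq_zero (hm : IsFinitelyAdditiveProbability 𝒜 m) (hs : s ∈ 𝒜)
    (ht : t ∈ 𝒜) (hst : m (s ∆ t) = 0) : m s = m t := by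
  have hempty := hm.isSetAlgebra.empty_mem
  have hs_le := hm.symmDiff_triangle hs ht hempty
  have ht_le := hm.symmDiff_triangle ht hs hempty
  rw [symmDiff_comm t s] at ht_le
  simp only [show ∀ u : Set α, u ∆ ∅ = u from symmDiff_bot] at hs_le ht_le
  linarith

theorem symmDiff_eq (hm : IsFinitelyAdditiveProbability 𝒜 m) (hs : s ∈ 𝒜) (ht : t ∈ 𝒜) :
    m (s ∆ t) = m (s ∪ t) - m (s ∩ t) :=
  symmDiff_eq_sup_sdiff_inf s t ▸ hm.sdiff_of_subset (hm.isSetAlgebra.union_mem hs ht)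
    (hm.isSetAlgebra.inter_mem hs ht) (inter_subset_left.trans subset_union_left)

end IsFinitelyAdditiveProbability

namespace IsMetricIsoFromLebesgue

variable {𝒜 : Set (Set ℕ)} {m : Set ℕ → ℝ} {φ : Set I01 → Set ℕ} {M N : Set I01} {C D : Set ℕ}

theorem measure_symmDiff (hm : IsFinitelyAdditiveProbability 𝒜 m)
    (hφ : IsMetricIsoFromLebesgue 𝒜 m φ) (hM : MeasurableSet M) (hN : MeasurableSet N) :
    m (φ M ∆ φ N) = volI.real (M ∆ N) := by
  obtain ⟨hmem, hpres, -, hunion, hinter, -⟩ := hφ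
  have h𝒜 := hm.isSetAlgebra
  rw [hm.symmDiff_eq (hmem M hM) (hmem N hN),
    ← hm.eq_of_symmDiff_eq_zero (hmem _ (hM.union hN))
      (h𝒜.union_mem (hmem M hM) (hmem N hN)) (hunion M N hM hN),
    ← hm.eq_of_symmDiff_eq_zero (hmem _ (hM.inter hN))
      (h𝒜.inter_mem (hmem M hM) (hmem N hN)) (hinter M N hM hN),
    hpres _ (hM.union hN), hpres _ (hM.inter hN), ← measureReal_def, ← measureReal_def,
    ← measureReal_sdiff (inter_subset_left.trans subset_union_left) (hM.inter hN)]
  exact congrArg volI.real (symmDiff_eq_sup_sdiff_inf M N).symm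

theorem symmDiff_compl_le (hm : IsFinitelyAdditiveProbability 𝒜 m)
    (hφ : IsMetricIsoFromLebesgue 𝒜 m φ) (hM : MeasurableSet M) (hC : C ∈ 𝒜) :
    m (φ Mᶜ ∆ Cᶜ) ≤ m (φ M ∆ C) := by
  obtain ⟨hmem, -, -, -, -, hcompl, -⟩ := hφ
  have h𝒜 := hm.isSetAlgebra
  have := hm.symmDiff_triangle (hmem _ hM.compl) (h𝒜.compl_mem (hmem M hM)) (h𝒜.compl_mem hC)
  rwa [hcompl M hM, compl_symmDiff_compl, zero_add] at this

theorem symmDiff_union_le (hm : IsFinitelyAdditiveProbability 𝒜 m)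
    (hφ : IsMetricIsoFromLebesgue 𝒜 m φ) (hM : MeasurableSet M) (hN : MeasurableSet N)
    (hC : C ∈ 𝒜) (hD : D ∈ 𝒜) :
    m (φ (M ∪ N) ∆ (C ∪ D)) ≤ m (φ M ∆ C) + m (φ N ∆ D) := by
  obtain ⟨hmem, -, -, hunion, -⟩ := hφ
  have h𝒜 := hm.isSetAlgebra
  have hMC := h𝒜.symmDiff_mem (hmem M hM) hC
  have hND := h𝒜.symmDiff_mem (hmem N hN) hD
  calc m (φ (M ∪ N) ∆ (C ∪ D))
      ≤ m (φ (M ∪ N) ∆ (φ M ∪ φ N)) + m ((φ M ∪ φ N) ∆ (C ∪ D)) :=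
        hm.symmDiff_triangle (hmem _ (hM.union hN)) (h𝒜.union_mem (hmem M hM) (hmem N hN))
          (h𝒜.union_mem hC hD)
    _ ≤ 0 + m (φ M ∆ C ∪ φ N ∆ D) := by
        rw [hunion M N hM hN]
        gcongr
        exact hm.mono (h𝒜.symmDiff_mem (h𝒜.union_mem (hmem M hM) (hmem N hN))
          (h𝒜.union_mem hC hD)) (h𝒜.union_mem hMC hND) union_symmDiff_union_subset
    _ ≤ m (φ M ∆ C) + m (φ N ∆ D) := by rw [zero_add]; exact hm.union_le hMC hND

theorem symmDiff_univ_le (hm : IsFinitelyAdditiveProbability 𝒜 m)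
    (hφ : IsMetricIsoFromLebesgue 𝒜 m φ) (hC : C ∈ 𝒜) : m (φ univ ∆ C) ≤ 1 - m C := by
  obtain ⟨hmem, -, -, -, -, -, huniv, -⟩ := hφ
  have := hm.symmDiff_triangle (hmem _ MeasurableSet.univ) hm.isSetAlgebra.univ_mem hC
  rwa [huniv, show univ ∆ C = Cᶜ from top_symmDiff C, hm.compl hC, zero_add] at this

end IsMetricIsoFromLebesgue

def diagonalCopy (x : ℕ → ℕ → ℕ) (φ : ℕ → Set I01 → Set ℕ) (M : Set I01) : Set ℕ :=
  ⋃ n, x n '' φ n M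

section DiagonalCopy

variable {x : ℕ → ℕ → ℕ} {𝒜 : ℕ → Set (Set ℕ)} {m : ℕ → Set ℕ → ℝ}
  {φ : ℕ → Set I01 → Set ℕ} {ℱ : Set (Set ℕ)}

theorem preimage_diagonalCopy (hx : ∀ n, Injective (x n))
    (hdisj : Pairwise (Disjoint on fun n ↦ range (x n))) (n : ℕ) (M : Set I01) :
    x n ⁻¹' diagonalCopy x φ M = φ n M :=
  preimage_iUnion_image_of_pairwise_disjoint hx hdisj (fun k ↦ φ k M) n

theorem isSetAlgebra_setOf_exists_tendsto_symmDiff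
    (hm : ∀ n, IsFinitelyAdditiveProbability (𝒜 n) (m n))
    (hφ : ∀ n, IsMetricIsoFromLebesgue (𝒜 n) (m n) (φ n)) :
    IsSetAlgebra {C | (∀ n, x n ⁻¹' C ∈ 𝒜 n) ∧ ∃ M, MeasurableSet M ∧
      Tendsto (fun n ↦ m n (φ n M ∆ (x n ⁻¹' C))) atTop (𝓝 0)} where
  empty_mem := by
    refine ⟨fun n ↦ (hm n).isSetAlgebra.empty_mem, ∅, .empty,
      tendsto_const_nhds.congr fun n ↦ ?_⟩
    rw [preimage_empty, show φ n ∅ ∆ ∅ = φ n ∅ from symmDiff_bot _, (hφ n).2.1 ∅ .empty,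
      measure_empty, ENNReal.toReal_zero]
  compl_mem := by
    rintro C ⟨hC, M, hM, hlim⟩
    exact ⟨fun n ↦ (hm n).isSetAlgebra.compl_mem (hC n), Mᶜ, hM.compl,
      squeeze_zero (fun n ↦ (hm n).nonneg _ ((hm n).isSetAlgebra.symmDiff_mem
        ((hφ n).1 _ hM.compl) ((hm n).isSetAlgebra.compl_mem (hC n))))
        (fun n ↦ (hφ n).symmDiff_compl_le (hm n) hM (hC n)) hlim⟩
  union_mem := by
    rintro C D ⟨hC, M, hM, hlimC⟩ ⟨hD, N, hN, hlimD⟩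
    have hCD n := (hm n).isSetAlgebra.union_mem (hC n) (hD n)
    refine ⟨hCD, M ∪ N, hM.union hN, squeeze_zero (fun n ↦ (hm n).nonneg _
      ((hm n).isSetAlgebra.symmDiff_mem ((hφ n).1 _ (hM.union hN)) (hCD n)))
      (fun n ↦ (hφ n).symmDiff_union_le (hm n) hM hN (hC n) (hD n)) ?_⟩
    exact add_zero (0 : ℝ) ▸ hlimC.add hlimD

theorem exists_tendsto_symmDiff_of_mem_generateSetAlgebra (hx : ∀ n, Injective (x n))
    (hdisj : Pairwise (Disjoint on fun n ↦ range (x n)))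
    (hm : ∀ n, IsFinitelyAdditiveProbability (𝒜 n) (m n))
    (hφ : ∀ n, IsMetricIsoFromLebesgue (𝒜 n) (m n) (φ n))
    (hℱ : ∀ A ∈ ℱ, (∀ n, x n ⁻¹' A ∈ 𝒜 n) ∧
      Tendsto (fun n ↦ m n (x n ⁻¹' A)) atTop (𝓝 1))
    {C : Set ℕ} (hC : C ∈ generateSetAlgebra (ℱ ∪ diagonalCopy x φ '' {M | MeasurableSet M})) :
    (∀ n, x n ⁻¹' C ∈ 𝒜 n) ∧ ∃ M, MeasurableSet M ∧
      Tendsto (fun n ↦ m n (φ n M ∆ (x n ⁻¹' C))) atTop (𝓝 0) := by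
  refine (isSetAlgebra_setOf_exists_tendsto_symmDiff hm hφ).generateSetAlgebra_subset ?_ hC
  rintro A (hA | ⟨M, hM, rfl⟩)
  · obtain ⟨hA, hlim⟩ := hℱ A hA
    refine ⟨hA, univ, .univ, squeeze_zero (fun n ↦ (hm n).nonneg _
      ((hm n).isSetAlgebra.symmDiff_mem ((hφ n).1 _ .univ) (hA n)))
      (fun n ↦ (hφ n).symmDiff_univ_le (hm n) (hA n)) ?_⟩
    simpa using (tendsto_const_nhds (x := (1 : ℝ))).sub hlim
  · refine ⟨fun n ↦ ?_, M, hM, tendsto_const_nhds.congr fun n ↦ ?_⟩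
    · rw [preimage_diagonalCopy hx hdisj]
      exact (hφ n).1 M hM
    · rw [preimage_diagonalCopy hx hdisj, symmDiff_self, bot_eq_empty, (hm n).empty]

theorem isMetricIsoFromLebesgue_diagonalCopy (hx : ∀ n, Injective (x n))
    (hdisj : Pairwise (Disjoint on fun n ↦ range (x n)))
    (hm : ∀ n, IsFinitelyAdditiveProbability (𝒜 n) (m n))
    (hφ : ∀ n, IsMetricIsoFromLebesgue (𝒜 n) (m n) (φ n))
    (hℱ : ∀ A ∈ ℱ, (∀ n, x n ⁻¹' A ∈ 𝒜 n) ∧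
      Tendsto (fun n ↦ m n (x n ⁻¹' A)) atTop (𝓝 1))
    {μ : Set ℕ → ℝ}
    (hμ : ∀ A ∈ generateSetAlgebra (ℱ ∪ diagonalCopy x φ '' {M | MeasurableSet M}),
      Tendsto (fun n ↦ m n (x n ⁻¹' A)) atTop (𝓝 (μ A))) :
    IsMetricIsoFromLebesgue (generateSetAlgebra (ℱ ∪ diagonalCopy x φ '' {M | MeasurableSet M}))
      μ (diagonalCopy x φ) := by
  set 𝔹 := generateSetAlgebra (ℱ ∪ diagonalCopy x φ '' {M | MeasurableSet M})
  have h𝔹 : IsSetAlgebra 𝔹 := isSetAlgebra_generateSetAlgebra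
  have hΦ M (hM : MeasurableSet M) : diagonalCopy x φ M ∈ 𝔹 :=
    self_subset_generateSetAlgebra (Or.inr ⟨M, hM, rfl⟩)
  have hlim A (hA : A ∈ 𝔹) c (hc : ∀ n, m n (x n ⁻¹' A) = c) : μ A = c :=
    tendsto_nhds_unique (hμ A hA) (tendsto_const_nhds.congr fun n ↦ (hc n).symm)
  have hsymm M N (hM : MeasurableSet M) (hN : MeasurableSet N) :
      μ (diagonalCopy x φ M ∆ diagonalCopy x φ N) = volI.real (M ∆ N) :=
    hlim _ (h𝔹.symmDiff_mem (hΦ M hM) (hΦ N hN)) _ fun n ↦ by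
      rw [preimage_symmDiff, preimage_diagonalCopy hx hdisj, preimage_diagonalCopy hx hdisj]
      exact (hφ n).measure_symmDiff (hm n) hM hN
  have hsurj C (hC : C ∈ 𝔹) : ∃ M, MeasurableSet M ∧ μ (diagonalCopy x φ M ∆ C) = 0 := by
    obtain ⟨-, M, hM, hMC⟩ :=
      exists_tendsto_symmDiff_of_mem_generateSetAlgebra hx hdisj hm hφ hℱ hC
    refine ⟨M, hM, tendsto_nhds_unique (hμ _ (h𝔹.symmDiff_mem (hΦ M hM) hC)) ?_⟩
    simpa only [preimage_symmDiff, preimage_diagonalCopy hx hdisj] using hMC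
  simp only [IsMetricIsoFromLebesgue, forall_and] at hφ
  obtain ⟨-, hpres, -, hunion, hinter, hcompl, huniv, -⟩ := hφ
  have hpre := preimage_diagonalCopy (φ := φ) hx hdisj
  refine ⟨hΦ, fun M hM ↦ hlim _ (hΦ M hM) _ fun n ↦ by rw [hpre]; exact hpres n M hM,
    fun M N hM hN ↦ by rw [hsymm M N hM hN, measureReal_eq_zero_iff],
    fun M N hM hN ↦ hlim _ (h𝔹.symmDiff_mem (hΦ _ (hM.union hN))
      (h𝔹.union_mem (hΦ M hM) (hΦ N hN))) 0 fun n ↦ ?_,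
    fun M N hM hN ↦ hlim _ (h𝔹.symmDiff_mem (hΦ _ (hM.inter hN))
      (h𝔹.inter_mem (hΦ M hM) (hΦ N hN))) 0 fun n ↦ ?_,
    fun M hM ↦ hlim _ (h𝔹.symmDiff_mem (hΦ _ hM.compl) (h𝔹.compl_mem (hΦ M hM))) 0 fun n ↦ ?_,
    hlim _ (h𝔹.symmDiff_mem (hΦ _ .univ) h𝔹.univ_mem) 0 fun n ↦ ?_, hsurj⟩
  all_goals simp only [preimage_symmDiff, preimage_union, preimage_inter, preimage_compl,
    preimage_univ, hpre]
  exacts [hunion n M N hM hN, hinter n M N hM hN, hcompl n M hM, huniv n]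

end DiagonalCopy

theorem stmt19_general
    -- a partition of `ω` into infinite sets, with increasing enumerations `x n`
    (B : ℕ → Set ℕ) (hBdisj : Pairwise (onFun Disjoint B))
    (x : ℕ → ℕ → ℕ) (hx : ∀ n, StrictMono (x n) ∧ Set.range (x n) = B n)
    -- subalgebras `𝔹_n` of `𝒫(ω)` carrying measures `μ_n`
    (𝔹n : ℕ → Set (Set ℕ))
    (hnempty : ∀ n, ∅ ∈ 𝔹n n) (hncompl : ∀ n, ∀ A ∈ 𝔹n n, Aᶜ ∈ 𝔹n n)
    (hnunion : ∀ n, ∀ A ∈ 𝔹n n, ∀ C ∈ 𝔹n n, A ∪ C ∈ 𝔹n n)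
    (μn : ℕ → Set ℕ → ℝ) (hμn1 : ∀ n, μn n univ = 1) (hμn0 : ∀ n A, 0 ≤ μn n A)
    (hμnadd : ∀ n, ∀ A ∈ 𝔹n n, ∀ C ∈ 𝔹n n, Disjoint A C →
      μn n (A ∪ C) = μn n A + μn n C)
    -- each `(𝔹_n, μ_n)` is metrically isomorphic to `(𝔐, λ)`, witnessed by `φ_n`
    (φn : ℕ → Set I01 → Set ℕ)
    (hφn : ∀ n, IsMetricIsoFromLebesgue (𝔹n n) (μn n) (φn n))
    -- the canonical construction: the almost full sets `ℱ`
    (ℱ : Set (Set ℕ))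
    (hℱ : ℱ = {A : Set ℕ | (∀ n, ∃ C ∈ 𝔹n n, A ∩ B n = x n '' C) ∧
        Tendsto (fun n => μn n {i | x n i ∈ A ∩ B n}) atTop (nhds 1)})
    -- the diagonal copies `ℱ'`
    (ℱ' : Set (Set ℕ))
    (hℱ' : ℱ' = {S : Set ℕ | ∃ M : Set I01, MeasurableSet M ∧
        S = ⋃ n, x n '' (φn n M)})
    -- `𝔹` is the algebra generated by `ℱ ∪ ℱ'`
    (𝔹 : Set (Set ℕ))
    (h𝔹 : 𝔹 = ⋂₀ {𝔸 : Set (Set ℕ) | ℱ ∪ ℱ' ⊆ 𝔸 ∧ ∅ ∈ 𝔸 ∧ (∀ A ∈ 𝔸, Aᶜ ∈ 𝔸) ∧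
        ∀ A ∈ 𝔸, ∀ C ∈ 𝔸, A ∪ C ∈ 𝔸})
    -- and `μ(A) = lim_n μ'_n(A ∩ B_n)` on `𝔹`
    (μ : Set ℕ → ℝ)
    (hμ : ∀ A ∈ 𝔹, Tendsto (fun n => μn n {i | x n i ∈ A ∩ B n}) atTop (nhds (μ A))) :
    IsMetricIsoFromLebesgue 𝔹 μ (fun M => ⋃ n, x n '' (φn n M)) := by
  have hinj n : Injective (x n) := (hx n).1.injective
  have hB n : B n = range (x n) := (hx n).2.symm
  have hdisj : Pairwise (Disjoint on fun n ↦ range (x n)) := funext hB ▸ hBdisj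
  have htrace n A : {i | x n i ∈ A ∩ B n} = x n ⁻¹' A := by rw [hB]; exact preimage_inter_range
  have hdiag : ℱ' = diagonalCopy x φn '' {M | MeasurableSet M} := by
    ext S; simp only [hℱ', diagonalCopy, mem_image, mem_ofPred_eq, eq_comm]
  rw [sInter_setOf_isSetAlgebra_eq_generateSetAlgebra, hdiag] at h𝔹
  subst h𝔹
  simp only [htrace] at hμ
  have hprob n : IsFinitelyAdditiveProbability (𝔹n n) (μn n) :=
    ⟨⟨hnempty n, fun A ↦ hncompl n A, fun A C hA ↦ hnunion n A hA C⟩, fun A _ ↦ hμn0 n A,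
      hμn1 n, hμnadd n⟩
  refine isMetricIsoFromLebesgue_diagonalCopy hinj hdisj hprob hφn (fun A hA ↦ ?_) hμ
  rw [hℱ, mem_ofPred_eq] at hA
  simp only [htrace] at hA
  simpa only [hB, exists_mem_inter_range_eq_image_iff (hinj _)] using hA

theorem stmt19
    -- a partition of `ω` into infinite sets, with increasing enumerations `x n`
    (B : ℕ → Set ℕ) (hBdisj : Pairwise (onFun Disjoint B))
    (hBinf : ∀ n, (B n).Infinite) (hBunion : ⋃ n, B n = univ)
    (x : ℕ → ℕ → ℕ) (hx : ∀ n, StrictMono (x n) ∧ Set.range (x n) = B n)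
    -- subalgebras `𝔹_n` of `𝒫(ω)` carrying measures `μ_n`
    (𝔹n : ℕ → Set (Set ℕ))
    (hnempty : ∀ n, ∅ ∈ 𝔹n n) (hncompl : ∀ n, ∀ A ∈ 𝔹n n, Aᶜ ∈ 𝔹n n)
    (hnunion : ∀ n, ∀ A ∈ 𝔹n n, ∀ C ∈ 𝔹n n, A ∪ C ∈ 𝔹n n)
    (μn : ℕ → Set ℕ → ℝ) (hμn1 : ∀ n, μn n univ = 1) (hμn0 : ∀ n A, 0 ≤ μn n A)
    (hμnadd : ∀ n, ∀ A ∈ 𝔹n n, ∀ C ∈ 𝔹n n, Disjoint A C →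
      μn n (A ∪ C) = μn n A + μn n C)
    -- each `(𝔹_n, μ_n)` is metrically isomorphic to `(𝔐, λ)`, witnessed by `φ_n`
    (φn : ℕ → Set I01 → Set ℕ)
    (hφn : ∀ n, IsMetricIsoFromLebesgue (𝔹n n) (μn n) (φn n))
    -- the canonical construction: the almost full sets `ℱ`
    (ℱ : Set (Set ℕ))
    (hℱ : ℱ = {A : Set ℕ | (∀ n, ∃ C ∈ 𝔹n n, A ∩ B n = x n '' C) ∧
        Tendsto (fun n => μn n {i | x n i ∈ A ∩ B n}) atTop (nhds 1)})
    -- the diagonal copies `ℱ'`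
    (ℱ' : Set (Set ℕ))
    (hℱ' : ℱ' = {S : Set ℕ | ∃ M : Set I01, MeasurableSet M ∧
        S = ⋃ n, x n '' (φn n M)})
    -- `𝔹` is the algebra generated by `ℱ ∪ ℱ'`
    (𝔹 : Set (Set ℕ))
    (h𝔹 : 𝔹 = ⋂₀ {𝔸 : Set (Set ℕ) | ℱ ∪ ℱ' ⊆ 𝔸 ∧ ∅ ∈ 𝔸 ∧ (∀ A ∈ 𝔸, Aᶜ ∈ 𝔸) ∧
        ∀ A ∈ 𝔸, ∀ C ∈ 𝔸, A ∪ C ∈ 𝔸})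
    -- and `μ(A) = lim_n μ'_n(A ∩ B_n)` on `𝔹`
    (μ : Set ℕ → ℝ)
    (hμ : ∀ A ∈ 𝔹, Tendsto (fun n => μn n {i | x n i ∈ A ∩ B n}) atTop (nhds (μ A))) :
    IsMetricIsoFromLebesgue 𝔹 μ (fun M => ⋃ n, x n '' (φn n M)) :=
  stmt19_general B hBdisj x hx 𝔹n hnempty hncompl hnunion μn hμn1 hμn0 hμnadd φn hφn ℱ hℱ ℱ' hℱ' 𝔹
    h𝔹 μ hμ
end
end
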